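/- Let G be a connected graph with subgraphs G_1 and G_2 such that G = G_1 ∪ G_2 and G_1 ∩ G_2 is a spanning connected subgraph of G. Then b(G) ≤ b(G_1) + b(G_2). -/

import Mathlib

open scoped Classical

noncomputable section

/-- Helper: quotients of finite types are finite. -/
noncomputable def quotFintype {α : Type} [Fintype α] (r : α → α → Prop) : Fintype (Quot r) :=
  Fintype.ofSurjective (Quot.mk r) fun q => Quot.exists_rep q

/-- A finite multigraph.  Each edge `e` carries an (arbitrarily chosen) ordering of its two
endpoints, `fst e` and `snd e`; a loop is an edge with `fst e = snd e`. -/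
structure Multigraph where
  V : Type
  E : Type
  fintV : Fintype V
  fintE : Fintype E
  fst : E → V
  snd : E → V

attribute [instance] Multigraph.fintV Multigraph.fintE

namespace Multigraph

variable (G : Multigraph)

/-- Incidence of a vertex and an edge, modulo 2 (a loop is incident twice, i.e. 0 mod 2). -/
noncomputable def inc (v : G.V) (e : G.E) : ZMod 2 :=
  (if G.fst e = v then 1 else 0) + (if G.snd e = v then 1 else 0)

/-- The cycle space of `G` over `F_2`: characteristic vectors of edge sets in which every
vertex has even degree (i.e. Eulerian subgraphs), with addition = symmetric difference. -/
noncomputable def cycleSpace : Submodule (ZMod 2) (G.E → ZMod 2) where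
  carrier := {x | ∀ v : G.V, ∑ e : G.E, G.inc v e * x e = 0}
  zero_mem' := by intro v; simp
  add_mem' := by
    intro a b ha hb v
    have h : ∀ e : G.E, G.inc v e * (a + b) e = G.inc v e * a e + G.inc v e * b e := by
      intro e
      show G.inc v e * (a e + b e) = G.inc v e * a e + G.inc v e * b e
      ring
    rw [Finset.sum_congr rfl fun e _ => h e, Finset.sum_add_distrib, ha v, hb v, add_zero]
  smul_mem' := by
    intro c x hx v
    have h : ∀ e : G.E, G.inc v e * (c • x) e = c * (G.inc v e * x e) := by
      intro e
      show G.inc v e * (c * x e) = c * (G.inc v e * x e)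
      ring
    rw [Finset.sum_congr rfl fun e _ => h e, ← Finset.mul_sum, hx v, mul_zero]

/-- The charge of an edge `e` with respect to a collection `B` of (characteristic vectors of)
subgraphs: the number of members of `B` containing `e`. -/
noncomputable def charge (B : Finset (G.E → ZMod 2)) (e : G.E) : ℕ :=
  (B.filter fun x => x e ≠ 0).card

/-- `B` is a basis of the cycle space of `G`. -/
def IsCycleBasis (B : Finset (G.E → ZMod 2)) : Prop :=
  (∀ x ∈ B, x ∈ G.cycleSpace) ∧
    LinearIndependent (ZMod 2) (fun x : B => (x : G.E → ZMod 2)) ∧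
    Submodule.span (ZMod 2) (B : Set (G.E → ZMod 2)) = G.cycleSpace

/-- `B` is a `k`-basis: a basis of the cycle space in which every edge has charge at most `k`. -/
def IsKBasis (k : ℕ) (B : Finset (G.E → ZMod 2)) : Prop :=
  G.IsCycleBasis B ∧ ∀ e : G.E, G.charge B e ≤ k

/-- The basis number of `G`: the least `k` such that `G` has a `k`-basis. -/
noncomputable def basisNum : ℕ := sInf {k | ∃ B, G.IsKBasis k B}

/-- Adjacency of two vertices. -/
def Adj (a b : G.V) : Prop :=
  ∃ e : G.E, (G.fst e = a ∧ G.snd e = b) ∨ (G.fst e = b ∧ G.snd e = a)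

/-- Connectivity. -/
def Connected : Prop :=
  Nonempty G.V ∧ ∀ a b : G.V, Relation.ReflTransGen G.Adj a b

/-- Degree of a vertex (a loop counts twice). -/
noncomputable def degree (v : G.V) : ℕ :=
  ∑ e : G.E, ((if G.fst e = v then 1 else 0) + (if G.snd e = v then 1 else 0))

/-- The subgraph with the same vertex set and edge set restricted to `S`. -/
noncomputable def edgeRestrict (S : Set G.E) : Multigraph where
  V := G.V
  E := S
  fintV := G.fintV
  fintE := (Set.toFinite S).fintype
  fst := fun e => G.fst e.1
  snd := fun e => G.snd e.1

/-- Deletion of a vertex (and all edges incident with it). -/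
noncomputable def deleteVertex (v : G.V) : Multigraph where
  V := {u : G.V // u ≠ v}
  E := {e : G.E // G.fst e ≠ v ∧ G.snd e ≠ v}
  fintV := by classical exact inferInstance
  fintE := by classical exact inferInstance
  fst := fun e => ⟨G.fst e.1, e.2.1⟩
  snd := fun e => ⟨G.snd e.1, e.2.2⟩

/-- `G` is 2-connected: at least 3 vertices, connected, and no cutvertex. -/
def TwoConnected : Prop :=
  G.Connected ∧ 3 ≤ Nat.card G.V ∧ ∀ v : G.V, (G.deleteVertex v).Connected

/-- A cycle of length `n` in `G`: `n` distinct vertices and `n` distinct edges, with edge `i`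
joining vertex `i` to vertex `i+1` (cyclically). -/
def IsCycleOn (n : ℕ) (vs : Fin n → G.V) (es : Fin n → G.E) : Prop :=
  Function.Injective vs ∧ Function.Injective es ∧
    ∀ i : Fin n,
      (G.fst (es i) = vs i ∧ G.snd (es i) = vs (finRotate n i)) ∨
      (G.fst (es i) = vs (finRotate n i) ∧ G.snd (es i) = vs i)

/-- A path with `n` edges, given by its (distinct) vertices and its edges. -/
def IsPathOn (n : ℕ) (vs : Fin (n + 1) → G.V) (es : Fin n → G.E) : Prop :=
  Function.Injective vs ∧
    ∀ i : Fin n,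
      (G.fst (es i) = vs i.castSucc ∧ G.snd (es i) = vs i.succ) ∨
      (G.fst (es i) = vs i.succ ∧ G.snd (es i) = vs i.castSucc)

/-- `p` is the characteristic vector of (the edge set of) a path from `s` to `t`. -/
def IsPathVec (s t : G.V) (p : G.E → ZMod 2) : Prop :=
  ∃ (n : ℕ) (vs : Fin (n + 1) → G.V) (es : Fin n → G.E),
    G.IsPathOn n vs es ∧ vs 0 = s ∧ vs (Fin.last n) = t ∧
      ∀ f : G.E, p f ≠ 0 ↔ ∃ i, es i = f

/-- Two edges lie in a common block: they are equal, or they lie on a common cycle. -/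
def BlockRel (e f : G.E) : Prop :=
  e = f ∨ ∃ (n : ℕ) (vs : Fin n → G.V) (es : Fin n → G.E),
    1 ≤ n ∧ G.IsCycleOn n vs es ∧ (∃ i, es i = e) ∧ (∃ j, es j = f)

/-- `T` is a spanning tree of `G` (as an edge set): the spanning subgraph with edge set `T`
is connected and has no cycles. -/
def IsSpanningTree (T : Set G.E) : Prop :=
  (G.edgeRestrict T).Connected ∧
    ∀ (n : ℕ) (vs : Fin n → (G.edgeRestrict T).V) (es : Fin n → (G.edgeRestrict T).E),
      (G.edgeRestrict T).IsCycleOn n vs es → n = 0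

/-- Contraction of the edge `e`: identify its two endpoints and delete `e`. -/
noncomputable def contract (e : G.E) : Multigraph where
  V := Quot (fun a b : G.V => a = G.fst e ∧ b = G.snd e)
  E := {f : G.E // f ≠ e}
  fintV := quotFintype _
  fintE := by classical exact inferInstance
  fst := fun f => Quot.mk _ (G.fst f.1)
  snd := fun f => Quot.mk _ (G.snd f.1)

/-- Addition of a (possibly parallel) edge joining `u` and `v`. -/
noncomputable def addEdge (u v : G.V) : Multigraph where
  V := G.V
  E := Option G.E
  fintV := G.fintV
  fintE := inferInstance
  fst := fun o => o.elim u G.fst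
  snd := fun o => o.elim v G.snd

/-- Subdivision of the edge `e`: delete `e` and add a new vertex (`none`) joined to both
endpoints of `e`. -/
noncomputable def subdivide (e : G.E) : Multigraph where
  V := Option G.V
  E := {f : G.E // f ≠ e} ⊕ Bool
  fintV := inferInstance
  fintE := by classical exact inferInstance
  fst := Sum.elim (fun f => some (G.fst f.1))
    (fun b => cond b (some (G.fst e)) (some (G.snd e)))
  snd := Sum.elim (fun f => some (G.snd f.1)) (fun _ => none)

/-- Replacement of the edge `e` of `G` by the graph `H` with terminals `s`, `t`:
delete `e`, take the disjoint union with `H`, and identify the endpoints of `e`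
with the terminals. -/
noncomputable def replaceEdge (e : G.E) (H : Multigraph) (s t : H.V) : Multigraph where
  V := Quot (fun a b : G.V ⊕ H.V =>
        (a = Sum.inl (G.fst e) ∧ b = Sum.inr s) ∨ (a = Sum.inl (G.snd e) ∧ b = Sum.inr t))
  E := {f : G.E // f ≠ e} ⊕ H.E
  fintV := quotFintype _
  fintE := by classical exact inferInstance
  fst := Sum.elim (fun f => Quot.mk _ (Sum.inl (G.fst f.1)))
    (fun f => Quot.mk _ (Sum.inr (H.fst f)))
  snd := Sum.elim (fun f => Quot.mk _ (Sum.inl (G.snd f.1)))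
    (fun f => Quot.mk _ (Sum.inr (H.snd f)))

/-! ### Combinatorial embeddings (rotation systems) and planarity -/

/-- Darts: each edge gives two darts. -/
def Dart : Type := G.E × Bool

noncomputable instance : Fintype G.Dart := inferInstanceAs (Fintype (G.E × Bool))

/-- The vertex at which a dart is based. -/
def dartVertex (d : G.Dart) : G.V := cond d.2 (G.fst d.1) (G.snd d.1)

/-- The involution exchanging the two darts of each edge. -/
def dartFlip : Equiv.Perm G.Dart where
  toFun d := (d.1, !d.2)
  invFun d := (d.1, !d.2)
  left_inv := fun d => by cases d; simp <;> rfl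
  right_inv := fun d => by cases d; simp <;> rfl

/-- `σ` is a rotation system: its orbits are exactly the sets of darts based at a
common vertex. -/
def IsRotation (σ : Equiv.Perm G.Dart) : Prop :=
  ∀ d d' : G.Dart, σ.SameCycle d d' ↔ G.dartVertex d = G.dartVertex d'

/-- The face permutation of a rotation system. -/
def facePerm (σ : Equiv.Perm G.Dart) : Equiv.Perm G.Dart := G.dartFlip.trans σ

/-- The faces of the embedding given by `σ`: orbits of the face permutation. -/
def Faces (σ : Equiv.Perm G.Dart) : Type := Quot (G.facePerm σ).SameCycle

/-- The face containing a given dart. -/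
def faceOf (σ : Equiv.Perm G.Dart) (d : G.Dart) : G.Faces σ := Quot.mk _ d

noncomputable def numFaces (σ : Equiv.Perm G.Dart) : ℕ := Nat.card (G.Faces σ)

noncomputable def numComponents : ℕ := Nat.card (Quot G.Adj)

/-- The number of connected components containing at least one edge. -/
noncomputable def numEdgedComponents : ℕ :=
  Nat.card {c : Quot G.Adj // ∃ e : G.E, Quot.mk G.Adj (G.fst e) = c}

/-- `σ` is a planar (genus zero) embedding, by Euler's formula
(componentwise `V - E + F = 2`, where components without edges contribute one global face). -/
def IsPlanarRotation (σ : Equiv.Perm G.Dart) : Prop :=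
  G.IsRotation σ ∧
    G.numFaces σ + Nat.card G.V = Nat.card G.E + G.numComponents + G.numEdgedComponents

/-- `G` is planar: it admits a genus-zero combinatorial embedding. -/
def IsPlanar : Prop := ∃ σ : Equiv.Perm G.Dart, G.IsPlanarRotation σ

/-- The boundary of a face, as an element of `F_2^E`: the edges having exactly one of
their two darts on the face. -/
noncomputable def faceBoundary (σ : Equiv.Perm G.Dart) (c : G.Faces σ) : G.E → ZMod 2 :=
  fun e => ∑ b : Bool, if G.faceOf σ (e, b) = c then 1 else 0

/-- The vertex `v` lies on the face `c`. -/
def VertexOnFace (σ : Equiv.Perm G.Dart) (v : G.V) (c : G.Faces σ) : Prop :=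
  ∃ d : G.Dart, G.faceOf σ d = c ∧ G.dartVertex d = v

/-- The edge `e` lies on the face `c`. -/
def EdgeOnFace (σ : Equiv.Perm G.Dart) (e : G.E) (c : G.Faces σ) : Prop :=
  ∃ b : Bool, G.faceOf σ (e, b) = c

end Multigraph

/-! The cycle space of `G` is the sum of the cycle spaces of `G₁` and `G₂`. Indeed, an edge `e`
of `G` outside `G₁` lies in `G₂`, and `e` together with a path in the connected spanning subgraph
`G₁ ∩ G₂` joining its endpoints is a cycle of `G₂`; subtracting these cycles from a cycle `x` of
`G`, one for each edge of `x` outside `G₁`, leaves a cycle of `G₁`. Hence the union of a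
`b(G₁)`-basis of `G₁` and a `b(G₂)`-basis of `G₂` spans the cycle space of `G`, and a basis
extracted from this union charges every edge at most `b(G₁) + b(G₂)` times. -/

namespace Multigraph

variable (G : Multigraph)

def boundary : (G.E → ZMod 2) →ₗ[ZMod 2] (G.V → ZMod 2) :=
  Matrix.mulVecLin (Matrix.of G.inc)

lemma cycleSpace_eq_ker_boundary : G.cycleSpace = LinearMap.ker G.boundary := by
  ext x
  exact funext_iff.symm

lemma boundary_single (e : G.E) :
    G.boundary (Pi.single e 1) = Pi.single (G.fst e) 1 + Pi.single (G.snd e) 1 := by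
  ext v
  simp [boundary, inc, Pi.single_apply, eq_comm]

lemma exists_boundary_eq_of_reflTransGen {S : Set G.E} {a b : G.V}
    (h : Relation.ReflTransGen (G.edgeRestrict S).Adj a b) :
    ∃ p : G.E → ZMod 2, (∀ e ∉ S, p e = 0) ∧
      G.boundary p = Pi.single a 1 + Pi.single b 1 := by
  induction h with
  | refl => exact ⟨0, fun _ _ => rfl, by rw [map_zero, ZModModule.add_self]⟩
  | @tail b c _ hbc ih =>
    obtain ⟨p, hpS, hp⟩ := ih
    obtain ⟨f, hf⟩ := hbc
    refine ⟨p + Pi.single f.1 1, fun e he => ?_, ?_⟩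
    · have hef : e ≠ f.1 := fun h => he (h ▸ f.2)
      simp [hpS e he, hef]
    · rw [map_add, hp, G.boundary_single]
      rcases hf with ⟨hb, hc⟩ | ⟨hc, hb⟩
      · rw [show G.fst f.1 = b from hb, show G.snd f.1 = c from hc,
          ZModModule.add_add_add_cancel]
      · rw [show G.fst f.1 = c from hc, show G.snd f.1 = b from hb, add_comm (Pi.single c 1),
          ZModModule.add_add_add_cancel]

def extendByZero (S : Set G.E) :
    ((G.edgeRestrict S).E → ZMod 2) →ₗ[ZMod 2] (G.E → ZMod 2) :=
  Function.ExtendByZero.linearMap (ZMod 2) (Subtype.val : S → G.E)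

lemma extendByZero_apply_val {S : Set G.E} (x : (G.edgeRestrict S).E → ZMod 2)
    (e : (G.edgeRestrict S).E) : G.extendByZero S x e.1 = x e :=
  Subtype.val_injective.extend_apply x 0 e

lemma extendByZero_apply_of_notMem {S : Set G.E} (x : (G.edgeRestrict S).E → ZMod 2)
    {e : G.E} (he : e ∉ S) : G.extendByZero S x e = 0 :=
  Function.extend_apply' _ _ _ fun ⟨f, hf⟩ => he (hf ▸ f.2)

lemma extendByZero_restrict {S : Set G.E} {x : G.E → ZMod 2} (hx : ∀ e ∉ S, x e = 0) :
    G.extendByZero S (fun e => x e.1) = x := by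
  funext e
  by_cases he : e ∈ S
  · exact G.extendByZero_apply_val _ ⟨e, he⟩
  · rw [G.extendByZero_apply_of_notMem _ he, hx e he]

lemma boundary_extendByZero (S : Set G.E) (x : (G.edgeRestrict S).E → ZMod 2) :
    G.boundary (G.extendByZero S x) = (G.edgeRestrict S).boundary x := by
  funext v
  refine (Fintype.sum_of_injective (fun e : (G.edgeRestrict S).E => e.1) Subtype.val_injective
    (fun e => (G.edgeRestrict S).inc v e * x e) (fun e => G.inc v e * G.extendByZero S x e)
    ?_ ?_).symm
  · rintro e he
    rw [G.extendByZero_apply_of_notMem _ fun h => he ⟨⟨e, h⟩, rfl⟩, mul_zero]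
  · intro e
    rw [G.extendByZero_apply_val]
    rfl

lemma mem_map_cycleSpace_iff {S : Set G.E} {x : G.E → ZMod 2} :
    x ∈ (G.edgeRestrict S).cycleSpace.map (G.extendByZero S) ↔
      x ∈ G.cycleSpace ∧ ∀ e ∉ S, x e = 0 := by
  simp only [cycleSpace_eq_ker_boundary, Submodule.mem_map, LinearMap.mem_ker]
  constructor
  · rintro ⟨y, hy, rfl⟩
    exact ⟨(G.boundary_extendByZero S y).trans hy, fun e he => G.extendByZero_apply_of_notMem y he⟩
  · rintro ⟨hx, hxS⟩
    refine ⟨fun e => x e.1, ?_, G.extendByZero_restrict hxS⟩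
    rw [← boundary_extendByZero, G.extendByZero_restrict hxS, hx]
    rfl

lemma exists_single_add_mem_cycleSpace {S : Set G.E} (hS : (G.edgeRestrict S).Connected)
    (e : G.E) : ∃ p : G.E → ZMod 2, (∀ f ∉ S, p f = 0) ∧ Pi.single e 1 + p ∈ G.cycleSpace := by
  obtain ⟨p, hpS, hp⟩ := G.exists_boundary_eq_of_reflTransGen (hS.2 (G.fst e) (G.snd e))
  refine ⟨p, hpS, ?_⟩
  rw [cycleSpace_eq_ker_boundary, LinearMap.mem_ker, map_add, boundary_single, hp,
    ZModModule.add_self]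

theorem cycleSpace_eq_sup {E₁ E₂ : Set G.E} (hcover : E₁ ∪ E₂ = Set.univ)
    (hint : (G.edgeRestrict (E₁ ∩ E₂)).Connected) :
    G.cycleSpace = (G.edgeRestrict E₁).cycleSpace.map (G.extendByZero E₁) ⊔
      (G.edgeRestrict E₂).cycleSpace.map (G.extendByZero E₂) := by
  refine le_antisymm (fun x hx => ?_)
    (sup_le (fun x hx => (mem_map_cycleSpace_iff G).1 hx |>.1)
      (fun x hx => (mem_map_cycleSpace_iff G).1 hx |>.1))
  choose p hpS hp using G.exists_single_add_mem_cycleSpace hint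
  set z := ∑ e ∈ (E₁ᶜ).toFinset, x e • (Pi.single e 1 + p e) with hz_def
  have hz_apply : ∀ f,
      z f = ∑ e ∈ (E₁ᶜ).toFinset, x e * ((Pi.single e 1 : G.E → ZMod 2) f + p e f) := fun f => by
    simp only [hz_def, Finset.sum_apply, Pi.smul_apply, Pi.add_apply, smul_eq_mul]
  have hz : z ∈ G.cycleSpace := Submodule.sum_mem _ fun e _ => Submodule.smul_mem _ _ (hp e)
  have hzE₂ : ∀ f ∉ E₂, z f = 0 := by
    intro f hf
    have hf₁ : f ∈ E₁ := (hcover ▸ Set.mem_univ f : f ∈ E₁ ∪ E₂).resolve_right hf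
    rw [hz_apply]
    refine Finset.sum_eq_zero fun e he => ?_
    have hef : e ≠ f := fun h => (Set.mem_toFinset.1 he) (h ▸ hf₁)
    rw [Pi.single_eq_of_ne' hef, hpS e f fun h => hf h.2, add_zero, mul_zero]
  have hzE₁ : ∀ f ∉ E₁, z f = x f := by
    intro f hf
    rw [hz_apply]
    simp only [hpS _ f fun h => hf h.1, add_zero, Pi.single_apply, mul_ite, mul_one, mul_zero]
    rw [Finset.sum_ite_eq, if_pos (Set.mem_toFinset.2 hf)]
  rw [← sub_add_cancel x z]
  exact Submodule.add_mem_sup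
    ((mem_map_cycleSpace_iff G).2 ⟨sub_mem hx hz, fun f hf => by simp [hzE₁ f hf]⟩)
    ((mem_map_cycleSpace_iff G).2 ⟨hz, hzE₂⟩)

lemma charge_mono {B B' : Finset (G.E → ZMod 2)} (h : B ⊆ B') (e : G.E) :
    G.charge B e ≤ G.charge B' e :=
  Finset.card_le_card (Finset.filter_subset_filter _ h)

lemma charge_union_le (B B' : Finset (G.E → ZMod 2)) (e : G.E) :
    G.charge (B ∪ B') e ≤ G.charge B e + G.charge B' e := by
  rw [charge, Finset.filter_union]
  exact Finset.card_union_le _ _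

lemma charge_image_extendByZero_le {S : Set G.E} {B : Finset ((G.edgeRestrict S).E → ZMod 2)}
    {k : ℕ} (hB : ∀ e, (G.edgeRestrict S).charge B e ≤ k) (e : G.E) :
    G.charge (B.image (G.extendByZero S)) e ≤ k := by
  have himage : G.charge (B.image (G.extendByZero S)) e ≤
      (B.filter fun x => G.extendByZero S x e ≠ 0).card := by
    rw [charge, Finset.filter_image]
    exact Finset.card_image_le
  by_cases he : e ∈ S
  · have hval : ∀ x, G.extendByZero S x e = x ⟨e, he⟩ := fun x =>
      G.extendByZero_apply_val x ⟨e, he⟩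
    simp only [hval] at himage
    exact himage.trans (hB ⟨e, he⟩)
  · exact himage.trans (by simp [G.extendByZero_apply_of_notMem _ he])

lemma exists_cycleBasis_subset {s : Set (G.E → ZMod 2)}
    (hs : Submodule.span (ZMod 2) s = G.cycleSpace) :
    ∃ B : Finset (G.E → ZMod 2), G.IsCycleBasis B ∧ (B : Set (G.E → ZMod 2)) ⊆ s := by
  obtain ⟨b, hbs, hspan, hind⟩ := exists_linearIndependent (ZMod 2) s
  have hb : ((Set.toFinite b).toFinset : Set (G.E → ZMod 2)) = b := Set.Finite.coe_toFinset _
  refine ⟨(Set.toFinite b).toFinset, ⟨fun x hx => ?_, ?_, ?_⟩, hb.symm ▸ hbs⟩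
  · rw [← hs]
    exact Submodule.subset_span (hbs (Set.Finite.mem_toFinset _ |>.1 hx))
  · exact ((linearIndependent_subtype_iff.mp hind).mono hb.subset).linearIndependent
  · rw [hb, hspan, hs]

lemma exists_isKBasis_basisNum : ∃ B, G.IsKBasis G.basisNum B := by
  obtain ⟨B, hB, -⟩ := G.exists_cycleBasis_subset (Submodule.span_eq G.cycleSpace)
  exact Nat.sInf_mem (s := {k | ∃ B, G.IsKBasis k B})
    ⟨B.card, B, hB, fun e => Finset.card_filter_le _ _⟩

end Multigraph

theorem basisNum_le_of_cover_general (G : Multigraph) (E₁ E₂ : Set G.E)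
    (hcover : E₁ ∪ E₂ = Set.univ)
    (hint : (G.edgeRestrict (E₁ ∩ E₂)).Connected) :
    G.basisNum ≤ (G.edgeRestrict E₁).basisNum + (G.edgeRestrict E₂).basisNum := by
  obtain ⟨B₁, hB₁, hk₁⟩ := (G.edgeRestrict E₁).exists_isKBasis_basisNum
  obtain ⟨B₂, hB₂, hk₂⟩ := (G.edgeRestrict E₂).exists_isKBasis_basisNum
  set F := B₁.image (G.extendByZero E₁) ∪ B₂.image (G.extendByZero E₂)
  have hF : Submodule.span (ZMod 2) (F : Set (G.E → ZMod 2)) = G.cycleSpace := by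
    rw [Finset.coe_union, Submodule.span_union, Finset.coe_image, Finset.coe_image,
      ← Submodule.map_span, ← Submodule.map_span, hB₁.2.2, hB₂.2.2,
      G.cycleSpace_eq_sup hcover hint]
  obtain ⟨B, hB, hBF⟩ := G.exists_cycleBasis_subset hF
  refine Nat.sInf_le (show ∃ B, G.IsKBasis _ B from ⟨B, hB, fun e => ?_⟩)
  calc G.charge B e ≤ G.charge F e := G.charge_mono (Finset.coe_subset.1 hBF) e
    _ ≤ _ := G.charge_union_le _ _ e
    _ ≤ _ := add_le_add (G.charge_image_extendByZero_le hk₁ e)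
      (G.charge_image_extendByZero_le hk₂ e)

/-- Let `G` be a connected graph with subgraphs `G₁`, `G₂` (given by edge sets
`E₁`, `E₂`) such that `G = G₁ ∪ G₂` and `G₁ ∩ G₂` is a spanning connected subgraph of `G`.
Then `b(G) ≤ b(G₁) + b(G₂)`. -/
theorem basisNum_le_of_cover (G : Multigraph) (hG : G.Connected) (E₁ E₂ : Set G.E)
    (hcover : E₁ ∪ E₂ = Set.univ)
    (hint : (G.edgeRestrict (E₁ ∩ E₂)).Connected) :
    G.basisNum ≤ (G.edgeRestrict E₁).basisNum + (G.edgeRestrict E₂).basisNum :=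
  basisNum_le_of_cover_general G E₁ E₂ hcover hint
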